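/- If T is an automorphism of H^∞_1(𝔻), then for every f ∈ H^∞_1(𝔻) the closure of the range of f equals the closure of the range of Tf, i.e., closure(f(𝔻)) = closure((Tf)(𝔻)). -/

import Mathlib

open Set Metric Complex MeasureTheory Filter

noncomputable section

/-- The open unit disc in `ℂ`. -/
def D : Set ℂ := Metric.ball (0 : ℂ) 1

/-- `H^∞(𝔻)`: bounded analytic functions on the open unit disc.  Functions are represented by
their values on `ℂ`; only the values on `D` are relevant, and two representatives are
identified when they agree on `D`. -/
def Hinf : Set (ℂ → ℂ) :=
  {f | DifferentiableOn ℂ f D ∧ ∃ C : ℝ, ∀ z ∈ D, ‖f z‖ ≤ C}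

/-- `H^∞_0(𝔻) = {f ∈ H^∞(𝔻) : f 0 = 0}`. -/
def Hinf0 : Set (ℂ → ℂ) := {f | f ∈ Hinf ∧ f 0 = 0}

/-- The Neil algebra `H^∞_1(𝔻) = {f ∈ H^∞(𝔻) : f'(0) = 0}`. -/
def Hinf1 : Set (ℂ → ℂ) := {f | f ∈ Hinf ∧ deriv f 0 = 0}

/-- `T` is an automorphism (bijective ℂ-linear multiplicative map) of the algebra of
holomorphic functions `A`, where two functions are identified when they agree on `D`. -/
def IsAlgAutOn (A : Set (ℂ → ℂ)) (T : (ℂ → ℂ) → (ℂ → ℂ)) : Prop :=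
  (∀ f ∈ A, T f ∈ A) ∧
  (∀ f ∈ A, ∀ g ∈ A, Set.EqOn f g D → Set.EqOn (T f) (T g) D) ∧
  (∀ f ∈ A, ∀ g ∈ A, Set.EqOn (T (f + g)) (T f + T g) D) ∧
  (∀ (c : ℂ), ∀ f ∈ A, Set.EqOn (T (c • f)) (c • T f) D) ∧
  (∀ f ∈ A, ∀ g ∈ A, Set.EqOn (T (f * g)) (T f * T g) D) ∧
  (∀ f ∈ A, ∀ g ∈ A, Set.EqOn (T f) (T g) D → Set.EqOn f g D) ∧
  (∀ g ∈ A, ∃ f ∈ A, Set.EqOn (T f) g D)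

/-- A function in `H^∞(𝔻)` is inner if its radial boundary values have modulus one at almost
every boundary point. -/
def IsInner (φ : ℂ → ℂ) : Prop :=
  φ ∈ Hinf ∧ ∀ᵐ (θ : ℝ) ∂(volume : Measure ℝ),
    Filter.Tendsto (fun r : ℝ => ‖φ ((r : ℂ) * Complex.exp ((θ : ℂ) * Complex.I))‖)
      (nhdsWithin 1 (Set.Iio 1)) (nhds 1)

/-- A conformal automorphism of the unit disc: a bijective holomorphic self-map of `D`. -/
def IsConfAut (τ : ℂ → ℂ) : Prop := DifferentiableOn ℂ τ D ∧ Set.BijOn τ D D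

lemma zero_mem_D : (0:ℂ) ∈ D := by simp [D]
lemma isOpen_D : IsOpen D := isOpen_ball

lemma diffAt0 {f : ℂ → ℂ} (hf : f ∈ Hinf1) : DifferentiableAt ℂ f 0 :=
  hf.1.1.differentiableAt (isOpen_D.mem_nhds zero_mem_D)

lemma one_mem_Hinf1 : (1 : ℂ → ℂ) ∈ Hinf1 := by
  refine ⟨⟨differentiableOn_const 1, 1, fun z _ => by simp⟩, ?_⟩
  simp [Pi.one_def]

lemma smul_one_mem_Hinf1 (c : ℂ) : c • (1 : ℂ → ℂ) ∈ Hinf1 := by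
  have : c • (1 : ℂ → ℂ) = fun _ => c := by funext z; simp
  rw [this]
  exact ⟨⟨differentiableOn_const c, ‖c‖, fun z _ => le_refl _⟩, by simp⟩

lemma add_mem_Hinf1 {f g : ℂ → ℂ} (hf : f ∈ Hinf1) (hg : g ∈ Hinf1) : f + g ∈ Hinf1 := by
  obtain ⟨⟨hfd, C1, hC1⟩, hf0⟩ := hf
  obtain ⟨⟨hgd, C2, hC2⟩, hg0⟩ := hg
  refine ⟨⟨hfd.add hgd, C1 + C2, fun z hz => ?_⟩, ?_⟩
  · exact le_trans (norm_add_le _ _) (add_le_add (hC1 z hz) (hC2 z hz))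
  · have h2 : deriv (f + g) 0 = deriv f 0 + deriv g 0 :=
      deriv_add (hfd.differentiableAt (isOpen_D.mem_nhds zero_mem_D))
        (hgd.differentiableAt (isOpen_D.mem_nhds zero_mem_D))
    rw [h2, hf0, hg0, add_zero]

lemma mul_mem_Hinf1 {f g : ℂ → ℂ} (hf : f ∈ Hinf1) (hg : g ∈ Hinf1) : f * g ∈ Hinf1 := by
  obtain ⟨⟨hfd, C1, hC1⟩, hf0⟩ := hf
  obtain ⟨⟨hgd, C2, hC2⟩, hg0⟩ := hg
  have hC1' : 0 ≤ C1 := le_trans (norm_nonneg _) (hC1 0 zero_mem_D)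
  refine ⟨⟨hfd.mul hgd, C1 * C2, fun z hz => ?_⟩, ?_⟩
  · rw [Pi.mul_apply, norm_mul]
    exact mul_le_mul (hC1 z hz) (hC2 z hz) (norm_nonneg _) hC1'
  · have h2 : deriv (f * g) 0 = deriv f 0 * g 0 + f 0 * deriv g 0 :=
      deriv_mul (hfd.differentiableAt (isOpen_D.mem_nhds zero_mem_D))
        (hgd.differentiableAt (isOpen_D.mem_nhds zero_mem_D))
    rw [h2, hf0, hg0]; ring

/-- Spectral characterization -/
lemma spec_char {f : ℂ → ℂ} (hf : f ∈ Hinf1) (l : ℂ) :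
    l ∉ closure (f '' D) ↔ ∃ g ∈ Hinf1, Set.EqOn ((f + (-l) • (1:ℂ→ℂ)) * g) 1 D := by
  constructor
  · intro h
    rw [Metric.mem_closure_iff] at h
    push_neg at h
    obtain ⟨ε, hε, hεle⟩ := h
    have hne : ∀ z ∈ D, f z - l ≠ 0 := by
      intro z hz h0
      have := hεle (f z) ⟨z, hz, rfl⟩
      rw [Complex.dist_eq] at this
      have : ‖l - f z‖ = 0 := by
        rw [show l - f z = -(f z - l) by ring, norm_neg, h0, norm_zero]
      linarith [hεle (f z) ⟨z, hz, rfl⟩, Complex.dist_eq l (f z) ▸ this]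
    refine ⟨fun z => (f z - l)⁻¹, ⟨⟨?_, ε⁻¹, fun z hz => ?_⟩, ?_⟩, fun z hz => ?_⟩
    · exact (hf.1.1.sub (differentiableOn_const l)).inv hne
    · rw [norm_inv]
      apply inv_anti₀ hε
      have := hεle (f z) ⟨z, hz, rfl⟩
      rwa [Complex.dist_eq, show l - f z = -(f z - l) by ring, norm_neg] at this
    · have hd : HasDerivAt f 0 0 := by
        have h := (diffAt0 hf).hasDerivAt; rwa [hf.2] at h
      have hd2 : HasDerivAt (fun z => f z - l) 0 0 := hd.sub_const l
      have := (hd2.inv (hne 0 zero_mem_D)).deriv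
      simp at this; exact this
    · have : (f z + (-l) * 1) * (f z - l)⁻¹ = 1 := by
        rw [show f z + (-l) * 1 = f z - l by ring]
        exact mul_inv_cancel₀ (hne z hz)
      simpa using this
  · rintro ⟨g, ⟨⟨_, C, hC⟩, _⟩, heq⟩
    have key : ∀ z ∈ D, (f z - l) * g z = 1 := by
      intro z hz
      have := heq hz
      simpa [sub_eq_add_neg] using this
    have hgpos : ∀ z ∈ D, 0 < ‖g z‖ := by
      intro z hz
      rcases eq_or_ne (g z) 0 with h | h
      · exfalso; have := key z hz; rw [h, mul_zero] at this; exact one_ne_zero this.symm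
      · exact norm_pos_iff.mpr h
    have hCpos : 0 < C := lt_of_lt_of_le (hgpos 0 zero_mem_D) (hC 0 zero_mem_D)
    rw [Metric.mem_closure_iff]
    push_neg
    refine ⟨C⁻¹, inv_pos.mpr hCpos, ?_⟩
    rintro y ⟨z, hz, rfl⟩
    rw [Complex.dist_eq, show l - f z = -(f z - l) by ring, norm_neg]
    have h1 : ‖f z - l‖ * ‖g z‖ = 1 := by
      rw [← norm_mul, key z hz, norm_one]
    rw [inv_le_iff_one_le_mul₀' hCpos] -- guess
    calc (1:ℝ) = ‖f z - l‖ * ‖g z‖ := h1.symm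
      _ ≤ ‖f z - l‖ * C := by
          exact mul_le_mul_of_nonneg_left (hC z hz) (norm_nonneg _)
      _ = C * ‖f z - l‖ := by ring

lemma T_one {T : (ℂ → ℂ) → (ℂ → ℂ)} (hT : IsAlgAutOn Hinf1 T) :
    Set.EqOn (T 1) 1 D := by
  obtain ⟨hmem, hcong, hadd, hsmul, hmul, hinj, hsurj⟩ := hT
  obtain ⟨h, hh, hTh⟩ := hsurj 1 one_mem_Hinf1
  intro z hz
  have h1 : T (1 * h) z = (T 1 * T h) z := hmul 1 one_mem_Hinf1 h hh hz
  rw [one_mul] at h1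
  have h2 : T h z = 1 := hTh hz
  simp only [Pi.mul_apply] at h1
  rw [h2, mul_one] at h1
  exact h1.symm

/-- T carries the "f + c•1" shift, up to EqOn. -/
lemma T_shift {T : (ℂ → ℂ) → (ℂ → ℂ)} (hT : IsAlgAutOn Hinf1 T)
    {f : ℂ → ℂ} (hf : f ∈ Hinf1) (c : ℂ) :
    Set.EqOn (T (f + c • (1:ℂ→ℂ))) (T f + c • (1:ℂ→ℂ)) D := by
  obtain ⟨hmem, hcong, hadd, hsmul, hmul, hinj, hsurj⟩ := hT
  intro z hz
  have h1 := hadd f hf (c • 1) (smul_one_mem_Hinf1 c) hz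
  have h2 := hsmul c 1 one_mem_Hinf1 hz
  have h3 := T_one ⟨hmem, hcong, hadd, hsmul, hmul, hinj, hsurj⟩ hz
  simp only [Pi.add_apply, Pi.smul_apply, Pi.one_apply, smul_eq_mul] at *
  rw [h1, h2, h3]

lemma transfer {T : (ℂ → ℂ) → (ℂ → ℂ)} (hT : IsAlgAutOn Hinf1 T)
    {f : ℂ → ℂ} (hf : f ∈ Hinf1) (l : ℂ) :
    (∃ g ∈ Hinf1, Set.EqOn ((f + (-l) • (1:ℂ→ℂ)) * g) 1 D) ↔
    (∃ g ∈ Hinf1, Set.EqOn ((T f + (-l) • (1:ℂ→ℂ)) * g) 1 D) := by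
  obtain ⟨hmem, hcong, hadd, hsmul, hmul, hinj, hsurj⟩ := hT
  have hTeq := T_shift ⟨hmem, hcong, hadd, hsmul, hmul, hinj, hsurj⟩ hf (-l)
  have hfc : f + (-l) • (1:ℂ→ℂ) ∈ Hinf1 := add_mem_Hinf1 hf (smul_one_mem_Hinf1 (-l))
  have hT1 := T_one ⟨hmem, hcong, hadd, hsmul, hmul, hinj, hsurj⟩
  constructor
  · rintro ⟨g, hg, heq⟩
    refine ⟨T g, hmem g hg, ?_⟩
    intro z hz
    have h1 : T ((f + (-l) • 1) * g) z = (T (f + (-l) • 1) * T g) z :=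
      hmul _ hfc g hg hz
    have h2 : T ((f + (-l) • 1) * g) z = T 1 z :=
      hcong _ (mul_mem_Hinf1 hfc hg) 1 one_mem_Hinf1 heq hz
    simp only [Pi.mul_apply] at h1 ⊢
    rw [← hTeq hz, ← h1, h2, hT1 hz]
  · rintro ⟨g, hg, heq⟩
    obtain ⟨h, hh, hTh⟩ := hsurj g hg
    refine ⟨h, hh, ?_⟩
    have key : Set.EqOn (T ((f + (-l) • 1) * h)) (T 1) D := by
      intro z hz
      have h1 : T ((f + (-l) • 1) * h) z = (T (f + (-l) • 1) * T h) z :=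
        hmul _ hfc h hh hz
      simp only [Pi.mul_apply] at h1
      rw [h1, hTeq hz, hTh hz, hT1 hz]
      exact heq hz
    exact hinj _ (mul_mem_Hinf1 hfc hh) 1 one_mem_Hinf1 key


/-- If `T` is an automorphism of the Neil algebra `H^∞_1(𝔻)`, then for every `f ∈ H^∞_1(𝔻)`
the closure of the range of `f` equals the closure of the range of `Tf`. -/
theorem automorphism_of_Neil_algebra_preserves_closure_of_range
    (T : (ℂ → ℂ) → (ℂ → ℂ)) (hT : IsAlgAutOn Hinf1 T) (f : ℂ → ℂ) (hf : f ∈ Hinf1) :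
    closure (f '' D) = closure (T f '' D) := by
  ext l
  rw [← not_iff_not, spec_char hf l, spec_char (hT.1 f hf) l]
  exact transfer hT hf l
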